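/- arXiv:1804.03932 — 5 statements merged into one kernel-verified Lean document; each statement's English description precedes it below -/
import Mathlib

section
/- Let r : ℝ^K → ℝ with r(p) ≥ 0 and P : ℝ^K → ℝ with P(p) > 0 for all p in a feasible set S. Define η* = sup over p ∈ S of r(p)/P(p), attained at p*. Then η* = r(p*)/P(p*) if and only if max over p ∈ S of (r(p) − η*·P(p)) = r(p*) − η*·P(p*) = 0. -/
/-! Since every denominator is positive, `r p / P p ≤ η` is equivalent to `r p - η * P p ≤ 0`
and `η = r p / P p` to `r p - η * P p = 0`. So `η*` bounds all ratios exactly when the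
parametric objective `r - η* P` is nonpositive on `S`, and `η*` is attained at `p*` exactly
when that objective vanishes there, which then makes `p*` a maximiser. -/

theorem eq_div_iff_sub_mul_eq_zero {𝕜 : Type*} [DivisionRing 𝕜] {a b η : 𝕜} (hb : b ≠ 0) :
    η = a / b ↔ a - η * b = 0 := by
  rw [eq_div_iff hb, sub_eq_zero, eq_comm]

section OrderedField

variable {𝕜 : Type*} [Field 𝕜] [LinearOrder 𝕜] [IsStrictOrderedRing 𝕜]

theorem sub_mul_nonpos_of_div_le {a b η : 𝕜} (hb : 0 < b) (h : a / b ≤ η) : a - η * b ≤ 0 :=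
  sub_nonpos.mpr ((div_le_iff₀ hb).mp h)

theorem zero_mem_upperBounds_sub_mul_image {α : Type*} {S : Set α} {r P : α → 𝕜}
    (hP : ∀ p ∈ S, 0 < P p) {η : 𝕜} (hη : η ∈ upperBounds ((fun p => r p / P p) '' S)) :
    0 ∈ upperBounds ((fun p => r p - η * P p) '' S) := by
  rintro _ ⟨p, hp, rfl⟩
  exact sub_mul_nonpos_of_div_le (hP p hp) (hη (Set.mem_image_of_mem _ hp))

end OrderedField

theorem dinkelbach_equivalence_general {K : ℕ} (S : Set (Fin K → ℝ))
    (r P : (Fin K → ℝ) → ℝ)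
    (hP : ∀ p ∈ S, 0 < P p)
    (pstar : Fin K → ℝ) (hpstar : pstar ∈ S)
    (ηstar : ℝ) (hη : IsLUB ((fun p => r p / P p) '' S) ηstar) :
    ηstar = r pstar / P pstar ↔
      (IsGreatest ((fun p => r p - ηstar * P p) '' S) (r pstar - ηstar * P pstar) ∧
        r pstar - ηstar * P pstar = 0) := by
  rw [eq_div_iff_sub_mul_eq_zero (hP pstar hpstar).ne']
  refine ⟨fun hzero => ⟨⟨Set.mem_image_of_mem _ hpstar, ?_⟩, hzero⟩, And.right⟩
  rw [hzero]
  exact zero_mem_upperBounds_sub_mul_image hP hη.1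

/-- Dinkelbach fractional programming equivalence. -/
theorem dinkelbach_equivalence {K : ℕ} (S : Set (Fin K → ℝ))
    (r P : (Fin K → ℝ) → ℝ)
    (hr : ∀ p ∈ S, 0 ≤ r p) (hP : ∀ p ∈ S, 0 < P p)
    (pstar : Fin K → ℝ) (hpstar : pstar ∈ S)
    (ηstar : ℝ) (hη : IsLUB ((fun p => r p / P p) '' S) ηstar) :
    ηstar = r pstar / P pstar ↔
      (IsGreatest ((fun p => r p - ηstar * P p) '' S) (r pstar - ηstar * P pstar) ∧
        r pstar - ηstar * P pstar = 0) :=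
  dinkelbach_equivalence_general S r P hP pstar hpstar ηstar hη
end

section
/- Fix all powers p_k for k ≠ i. The single-user energy efficiency η_i(p_i) = B·log₂(1 + c·p_i)/(p_i + P_c), with c > 0 and P_c > 0, is quasi-concave in p_i on [0, ∞) and has a unique maximizer. -/
/-!
The numerator `N p = B log₂ (1 + c p)` is strictly concave and the denominator `p + P_c` is
positive and affine, so `{p | r ≤ N p / (p + P_c)} = {p | 0 ≤ N p - r (p + P_c)}` is a superlevel
set of a concave function, hence convex. If `M` is the maximal value, every maximizer of the ratio
is a maximizer (with value `0`) of the strictly concave `N p - M (p + P_c)`, so there is at most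
one. A maximizer exists because the ratio is continuous, tends to `0` at infinity and is positive
at `p = 1`.
-/

open Real Set Filter Topology

section RatioOfConcaveByAffine

variable {E : Type*} [AddCommGroup E] [Module ℝ E] {s : Set E} {f g : E → ℝ}

lemma concaveOn_neg_const_mul (hg₁ : ConvexOn ℝ s g) (hg₂ : ConcaveOn ℝ s g) (r : ℝ) :
    ConcaveOn ℝ s fun x => -(r * g x) := by
  rcases le_total 0 r with hr | hr
  · exact (hg₁.smul hr).neg
  · exact (hg₂.smul (neg_nonneg.2 hr)).congr fun x _ => by simp [neg_mul]

lemma StrictConcaveOn.const_mul {k : ℝ} (hf : StrictConcaveOn ℝ s f) (hk : 0 < k) :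
    StrictConcaveOn ℝ s fun x => k * f x := by
  refine ⟨hf.1, fun x hx y hy hxy a b ha hb hab => ?_⟩
  calc a • (k * f x) + b • (k * f y) = k * (a • f x + b • f y) := by
        simp only [smul_eq_mul]; ring
    _ < k * f (a • x + b • y) := mul_lt_mul_of_pos_left (hf.2 hx hy hxy ha hb hab) hk

lemma ConcaveOn.quasiconcaveOn_div (hf : ConcaveOn ℝ s f) (hg₁ : ConvexOn ℝ s g)
    (hg₂ : ConcaveOn ℝ s g) (hg : ∀ x ∈ s, 0 < g x) :
    QuasiconcaveOn ℝ s fun x => f x / g x := by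
  intro r
  convert (hf.add (concaveOn_neg_const_mul hg₁ hg₂ r)).convex_ge 0 using 1
  ext x
  simp only [mem_ofPred_eq, Pi.add_apply]
  refine and_congr_right fun hx => ?_
  rw [le_div_iff₀ (hg x hx)]
  constructor <;> intro h <;> linarith

lemma StrictConcaveOn.eq_of_isMaxOn_div (hf : StrictConcaveOn ℝ s f) (hg₁ : ConvexOn ℝ s g)
    (hg₂ : ConcaveOn ℝ s g) (hg : ∀ x ∈ s, 0 < g x) {x y : E} (hx : x ∈ s) (hy : y ∈ s)
    (hfx : IsMaxOn (fun x => f x / g x) s x) (hfy : IsMaxOn (fun x => f x / g x) s y) :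
    x = y := by
  set M := f x / g x
  have hM : ∀ z ∈ s, f z + -(M * g z) ≤ 0 := fun z hz => by
    have := hfx hz
    simp only [mem_ofPred_eq, div_le_iff₀ (hg z hz)] at this
    linarith
  have hMx : f x + -(M * g x) = 0 := by
    simp only [M, div_mul_cancel₀ _ (hg x hx).ne']
    ring
  have hMy : f y + -(M * g y) = 0 := by
    have : f y / g y = M := le_antisymm (hfx hy) (hfy hx)
    rw [← this, div_mul_cancel₀ _ (hg y hy).ne']
    ring
  refine (hf.add_concaveOn (concaveOn_neg_const_mul hg₁ hg₂ M)).eq_of_isMaxOn ?_ ?_ hx hy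
  · exact fun z hz => (hM z hz).trans hMx.ge
  · exact fun z hz => (hM z hz).trans hMy.ge

end RatioOfConcaveByAffine

lemma ContinuousOn.exists_isMaxOn_Ici {β α : Type*} [LinearOrder β] [TopologicalSpace β]
    [OrderClosedTopology β] [CompactIccSpace β] [NoMinOrder β] [LinearOrder α]
    [TopologicalSpace α] [OrderTopology α] {f : β → α} {a x₀ : β} {L : α}
    (hf : ContinuousOn f (Ici a)) (hlim : Tendsto f atTop (𝓝 L)) (hx₀ : a ≤ x₀) (hL : L < f x₀) :
    ∃ x ∈ Ici a, IsMaxOn f (Ici a) x := by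
  refine hf.exists_isMaxOn' isClosed_Ici hx₀ ?_
  refine eventually_inf_principal.2 (Eventually.filter_mono cocompact_le_atBot_atTop ?_)
  refine eventually_sup.2 ⟨?_, ?_⟩
  · filter_upwards [eventually_lt_atBot a] with x hx hxa using absurd hxa (not_le.2 hx)
  · filter_upwards [hlim.eventually (gt_mem_nhds hL)] with x hx _ using hx.le

lemma strictConcaveOn_log_one_add_mul {c : ℝ} (hc : 0 < c) :
    StrictConcaveOn ℝ (Ici 0) fun x => log (1 + c * x) := by
  refine ⟨convex_Ici 0, fun x hx y hy hxy a b ha hb hab => ?_⟩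
  have hpos : ∀ z ∈ Ici (0 : ℝ), 1 + c * z ∈ Ioi 0 := fun z hz => by
    simp only [mem_Ici, mem_Ioi] at hz ⊢
    positivity
  have hne : 1 + c * x ≠ 1 + c * y := fun h => hxy (by simpa [hc.ne'] using h)
  convert strictConcaveOn_log_Ioi.2 (hpos x hx) (hpos y hy) hne ha hb hab using 2
  simp only [smul_eq_mul]
  linear_combination -hab

lemma tendsto_log_one_add_mul_div_add_atTop {c : ℝ} (hc : 0 < c) (d : ℝ) :
    Tendsto (fun p => log (1 + c * p) / (p + d)) atTop (𝓝 0) := by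
  have h := (tendsto_pow_log_div_mul_add_atTop c⁻¹ (d - c⁻¹) 1 (inv_ne_zero hc.ne')).comp
    (tendsto_atTop_add_const_left _ 1 (tendsto_id.const_mul_atTop hc))
  refine h.congr fun p => ?_
  simp only [Function.comp_apply, pow_one, id]
  congr 1
  field_simp
  ring

noncomputable def energyEfficiency (B c Pc p : ℝ) : ℝ :=
  B * logb 2 (1 + c * p) / (p + Pc)

section EnergyEfficiency

variable {B c Pc : ℝ}

lemma strictConcaveOn_mul_logb_one_add_mul (hB : 0 < B) (hc : 0 < c) :
    StrictConcaveOn ℝ (Ici 0) fun p => B * logb 2 (1 + c * p) :=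
  ((strictConcaveOn_log_one_add_mul hc).const_mul (div_pos hB (log_pos one_lt_two))).congr
    fun p _ => by simp only [logb]; ring

lemma continuousOn_energyEfficiency (hc : 0 < c) (hPc : 0 < Pc) :
    ContinuousOn (energyEfficiency B c Pc) (Ici 0) := by
  refine ContinuousOn.div (continuousOn_const.mul (ContinuousOn.logb (by fun_prop) ?_))
    (by fun_prop) ?_ <;>
  · intro p (hp : 0 ≤ p)
    positivity

lemma tendsto_energyEfficiency_atTop (hc : 0 < c) :
    Tendsto (energyEfficiency B c Pc) atTop (𝓝 0) := by
  have h := (tendsto_log_one_add_mul_div_add_atTop hc Pc).const_mul (B / log 2)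
  rw [mul_zero] at h
  refine h.congr fun p => ?_
  simp only [energyEfficiency, logb]
  ring

end EnergyEfficiency

/-- Single-user energy efficiency is quasi-concave with a unique maximizer. -/
theorem single_user_ee_quasiconcave (B c Pc : ℝ) (hB : 0 < B) (hc : 0 < c) (hPc : 0 < Pc) :
    QuasiconcaveOn ℝ (Set.Ici 0)
        (fun p : ℝ => B * Real.logb 2 (1 + c * p) / (p + Pc)) ∧
      ∃! pstar : ℝ, pstar ∈ Set.Ici (0 : ℝ) ∧
        IsMaxOn (fun p : ℝ => B * Real.logb 2 (1 + c * p) / (p + Pc)) (Set.Ici 0) pstar := by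
  have hnum := strictConcaveOn_mul_logb_one_add_mul hB hc
  have hden₁ : ConvexOn ℝ (Ici 0) fun p : ℝ => p + Pc :=
    (convexOn_id (convex_Ici 0)).add_const Pc
  have hden₂ : ConcaveOn ℝ (Ici 0) fun p : ℝ => p + Pc :=
    (concaveOn_id (convex_Ici 0)).add_const Pc
  have hden : ∀ p ∈ Ici (0 : ℝ), 0 < p + Pc := fun p (hp : 0 ≤ p) => by positivity
  have hpos_one : 0 < energyEfficiency B c Pc 1 := by
    have : 0 < logb 2 (1 + c * 1) := logb_pos one_lt_two (by linarith)
    unfold energyEfficiency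
    positivity
  obtain ⟨pstar, hpstar, hmax⟩ := (continuousOn_energyEfficiency hc hPc).exists_isMaxOn_Ici
    (tendsto_energyEfficiency_atTop hc) zero_le_one hpos_one
  refine ⟨hnum.concaveOn.quasiconcaveOn_div hden₁ hden₂ hden, pstar, ⟨hpstar, hmax⟩, ?_⟩
  rintro q ⟨hq, hqmax⟩
  exact hnum.eq_of_isMaxOn_div hden₁ hden₂ hden hq hpstar hqmax hmax
end

section
/- Stationarity of the Lagrangian L(q) = Σ_k (λ_k+1)·(a_k/ln 2)·B·(q_k − ln(σ² + Σ_{u≠k} g_{ku} e^{q_u})) − (η+φ)·Σ_k e^{q_k} + const with respect to q_i yields, at any stationary point, e^{q_i} = (λ_i+1)·(B·a_i/ln 2) / ( (B/ln 2)·Σ_{k≠i} (λ_k+1)·a_k·g_{ki}/I_k + (η+φ) ), where I_k = σ² + Σ_{u≠k} g_{ku}·e^{q_u}. -/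
/-!
Differentiating the Lagrangian in `q_i`: the rate of user `i` contributes its weight
`w_i = (λ_i + 1) a_i B / ln 2`, every other user `k` loses `w_k g_{ki} e^{q_i} / I_k` through its
interference term, and the power penalty contributes `-(η + φ) e^{q_i}`. Stationarity therefore
says that `e^{q_i}` times the denominator of the formula equals `w_i`, so that denominator is
nonzero because `w_i ≠ 0`.
-/

open Finset Real

section

variable {ι : Type*} [DecidableEq ι] (q : ι → ℝ) (i : ι)

theorem hasDerivAt_update_apply (k : ι) :
    HasDerivAt (fun t => Function.update q i t k) ((Pi.single i 1 : ι → ℝ) k) (q i) :=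
  hasDerivAt_pi.1 (hasDerivAt_update q i (q i)) k

theorem hasDerivAt_sum_mul_exp_update (c : ι → ℝ) (s : Finset ι) :
    HasDerivAt (fun t => ∑ k ∈ s, c k * exp (Function.update q i t k))
      (if i ∈ s then c i * exp (q i) else 0) (q i) := by
  refine (HasDerivAt.fun_sum fun k (_ : k ∈ s) =>
    ((hasDerivAt_update_apply q i k).exp).const_mul (c k)).congr_deriv ?_
  simp [Pi.single_apply]

end

noncomputable section

variable {ι : Type*} [Fintype ι] [DecidableEq ι] (q : ι → ℝ) (i : ι)

def interference (σ2 : ℝ) (g : ι → ι → ℝ) (x : ι → ℝ) (k : ι) : ℝ :=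
  σ2 + ∑ u ∈ univ.erase k, g k u * exp (x u)

variable {σ2 : ℝ} {g : ι → ι → ℝ}

theorem interference_pos (hσ : 0 < σ2) {k : ι} (hg : ∀ u, 0 ≤ g k u) (x : ι → ℝ) :
    0 < interference σ2 g x k :=
  add_pos_of_pos_of_nonneg hσ (sum_nonneg fun u _ => mul_nonneg (hg u) (exp_pos _).le)

theorem hasDerivAt_log_interference_update {k : ι} (hI : interference σ2 g q k ≠ 0) :
    HasDerivAt (fun t => log (interference σ2 g (Function.update q i t) k))
      ((if i ∈ univ.erase k then g k i * exp (q i) else 0) / interference σ2 g q k) (q i) := by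
  have h := ((hasDerivAt_sum_mul_exp_update q i (g k) (univ.erase k)).const_add σ2).log
    (by rwa [Function.update_eq_self])
  rwa [Function.update_eq_self] at h

def lagrangian (w : ι → ℝ) (c σ2 C : ℝ) (g : ι → ι → ℝ) (x : ι → ℝ) : ℝ :=
  ∑ k, w k * (x k - log (interference σ2 g x k)) - c * ∑ k, exp (x k) + C

variable {w : ι → ℝ} {c C : ℝ}

theorem hasDerivAt_lagrangian_update (hI : ∀ k, interference σ2 g q k ≠ 0) :
    HasDerivAt (fun t => lagrangian w c σ2 C g (Function.update q i t))
      (w i - exp (q i) * (∑ k ∈ univ.erase i, w k * g k i / interference σ2 g q k + c)) (q i) := by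
  have hexp : HasDerivAt (fun t => ∑ k, exp (Function.update q i t k)) (exp (q i)) (q i) := by
    simpa using hasDerivAt_sum_mul_exp_update q i 1 univ
  refine (((HasDerivAt.fun_sum fun k (_ : k ∈ univ) => ((hasDerivAt_update_apply q i k).sub
    (hasDerivAt_log_interference_update q i (hI k))).const_mul (w k)).sub
    (hexp.const_mul c)).add_const C).congr_deriv ?_
  have hcross : ∑ k, w k * ((if i ∈ univ.erase k then g k i * exp (q i) else 0) /
      interference σ2 g q k) = exp (q i) * ∑ k ∈ univ.erase i, w k * g k i / interference σ2 g q k := by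
    rw [← add_sum_erase _ _ (mem_univ i), mul_sum, if_neg (notMem_erase i univ), zero_div, mul_zero,
      zero_add]
    refine sum_congr rfl fun k hk => ?_
    rw [if_pos (mem_erase.2 ⟨(ne_of_mem_erase hk).symm, mem_univ i⟩)]
    ring
  simp only [mul_sub, sum_sub_distrib, Pi.single_apply, mul_ite, mul_one, mul_zero, sum_ite_eq',
    mem_univ, if_true, hcross]
  ring

theorem exp_eq_of_hasDerivAt_lagrangian_update_zero (hI : ∀ k, interference σ2 g q k ≠ 0)
    (hw : w i ≠ 0)
    (hstat : HasDerivAt (fun t => lagrangian w c σ2 C g (Function.update q i t)) 0 (q i)) :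
    exp (q i) = w i / (∑ k ∈ univ.erase i, w k * g k i / interference σ2 g q k + c) := by
  have hbalance : exp (q i) * (∑ k ∈ univ.erase i, w k * g k i / interference σ2 g q k + c) = w i :=
    (sub_eq_zero.1 ((hasDerivAt_lagrangian_update q i hI).unique hstat)).symm
  refine eq_div_of_mul_eq (fun hD => hw ?_) hbalance
  rw [← hbalance, hD, mul_zero]

end

open Finset in
theorem kkt_stationary_power_general {K : ℕ} (i : Fin K)
    (B η φ σ2 C : ℝ) (a lam : Fin K → ℝ) (g : Fin K → Fin K → ℝ)
    (hB : 0 < B) (hσ : 0 < σ2)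
    (ha : ∀ k, 0 < a k) (hlam : ∀ k, 0 ≤ lam k) (hg : ∀ k u, 0 ≤ g k u)
    (q : Fin K → ℝ)
    (L : (Fin K → ℝ) → ℝ)
    (hL : ∀ x : Fin K → ℝ, L x =
      (∑ k, (lam k + 1) * (a k / Real.log 2) * B *
          (x k - Real.log (σ2 + ∑ u ∈ univ.erase k, g k u * Real.exp (x u))))
        - (η + φ) * ∑ k, Real.exp (x k) + C)
    (hstat : ∀ j : Fin K, HasDerivAt (fun t : ℝ => L (Function.update q j t)) 0 (q j)) :
    Real.exp (q i) =
      (lam i + 1) * (B * a i / Real.log 2) /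
        ((B / Real.log 2) * ∑ k ∈ univ.erase i,
            (lam k + 1) * a k * g k i /
              (σ2 + ∑ u ∈ univ.erase k, g k u * Real.exp (q u))
          + (η + φ)) := by
  set w : Fin K → ℝ := fun k => (lam k + 1) * (a k / log 2) * B
  have hLw : L = lagrangian w (η + φ) σ2 C g := funext hL
  subst hLw
  have hw : w i ≠ 0 := by have := hlam i; have := ha i; positivity
  rw [exp_eq_of_hasDerivAt_lagrangian_update_zero q i
    (fun k => (interference_pos hσ (hg k) q).ne') hw (hstat i), mul_sum]
  congr 1
  · ring
  · congr 1
    exact sum_congr rfl fun k _ => by simp only [w, interference]; ring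

open Finset in
/-- KKT stationarity of the Lagrangian in log-power variables yields the
closed-form power allocation. -/
theorem kkt_stationary_power {K : ℕ} (i : Fin K)
    (B η φ σ2 C : ℝ) (a lam : Fin K → ℝ) (g : Fin K → Fin K → ℝ)
    (hB : 0 < B) (hσ : 0 < σ2) (hη : 0 ≤ η) (hφ : 0 ≤ φ) (hηφ : 0 < η + φ)
    (ha : ∀ k, 0 < a k) (hlam : ∀ k, 0 ≤ lam k) (hg : ∀ k u, 0 ≤ g k u)
    (q : Fin K → ℝ)
    (L : (Fin K → ℝ) → ℝ)
    (hL : ∀ x : Fin K → ℝ, L x =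
      (∑ k, (lam k + 1) * (a k / Real.log 2) * B *
          (x k - Real.log (σ2 + ∑ u ∈ univ.erase k, g k u * Real.exp (x u))))
        - (η + φ) * ∑ k, Real.exp (x k) + C)
    (hstat : ∀ j : Fin K, HasDerivAt (fun t : ℝ => L (Function.update q j t)) 0 (q j)) :
    Real.exp (q i) =
      (lam i + 1) * (B * a i / Real.log 2) /
        ((B / Real.log 2) * ∑ k ∈ univ.erase i,
            (lam k + 1) * a k * g k i /
              (σ2 + ∑ u ∈ univ.erase k, g k u * Real.exp (q u))
          + (η + φ)) :=
  kkt_stationary_power_general i B η φ σ2 C a lam g hB hσ ha hlam hg q L hL hstat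
end

section
/- If the sequence η_t is generated by the Dinkelbach iteration η_{t+1} = r(p_t)/P(p_t) where p_t maximizes r(p) − η_t·P(p) over a compact feasible set S, with r ≥ 0 continuous and P > 0 continuous, then η_t is non-decreasing and converges to the optimal ratio η* = max_{p∈S} r(p)/P(p). -/
/-- Convergence of Dinkelbach's algorithm: the ratio iterates are non-decreasing
and converge to the optimal ratio. -/
theorem dinkelbach_convergence {K : ℕ} (S : Set (Fin K → ℝ))
    (hS : S.Nonempty) (hScompact : IsCompact S)
    (r P : (Fin K → ℝ) → ℝ)
    (hrc : ContinuousOn r S) (hPc : ContinuousOn P S)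
    (hr : ∀ p ∈ S, 0 ≤ r p) (hP : ∀ p ∈ S, 0 < P p)
    (p : ℕ → (Fin K → ℝ)) (η : ℕ → ℝ)
    (hη0 : ∃ p0 ∈ S, η 0 = r p0 / P p0)
    (hpt : ∀ t, p t ∈ S ∧ IsMaxOn (fun x => r x - η t * P x) S (p t))
    (hupd : ∀ t, η (t + 1) = r (p t) / P (p t)) :
    Monotone η ∧
      ∃ ηstar : ℝ, IsGreatest ((fun x => r x / P x) '' S) ηstar ∧
        Filter.Tendsto η Filter.atTop (nhds ηstar) := by
  obtain ⟨p0, hp0S, hη0eq⟩ := hη0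
  have hPne : ∀ x ∈ S, P x ≠ 0 := fun x hx => (hP x hx).ne'
  have hfc : ContinuousOn (fun x => r x / P x) S := hrc.div hPc hPne
  obtain ⟨xs, hxsS, hxsmax⟩ := hScompact.exists_isMaxOn hS hfc
  set ηstar := r xs / P xs with hηstar
  have hgreat : IsGreatest ((fun x => r x / P x) '' S) ηstar :=
    ⟨⟨xs, hxsS, rfl⟩, by rintro y ⟨x, hx, rfl⟩; exact hxsmax hx⟩
  have hmem : ∀ t, ∃ q ∈ S, η t = r q / P q := by
    intro t
    cases t with
    | zero => exact ⟨p0, hp0S, hη0eq⟩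
    | succ n => exact ⟨p n, (hpt n).1, hupd n⟩
  have hle : ∀ t, η t ≤ ηstar := fun t => by
    obtain ⟨q, hq, hqe⟩ := hmem t
    rw [hqe]; exact hgreat.2 ⟨q, hq, rfl⟩
  have hkey : ∀ t, η t * P (p t) ≤ r (p t) := by
    intro t
    obtain ⟨q, hq, hqe⟩ := hmem t
    have h1 : r q - η t * P q = 0 := by
      rw [hqe, div_mul_cancel₀ _ (hPne q hq), sub_self]
    have h2 : r q - η t * P q ≤ r (p t) - η t * P (p t) := (hpt t).2 hq
    linarith
  have hmono : Monotone η := by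
    apply monotone_nat_of_le_succ
    intro t
    rw [hupd t, le_div_iff₀ (hP _ (hpt t).1)]
    exact hkey t
  refine ⟨hmono, ηstar, hgreat, ?_⟩
  have hbdd : BddAbove (Set.range η) := ⟨ηstar, by rintro y ⟨t, rfl⟩; exact hle t⟩
  have hL := tendsto_atTop_ciSup hmono hbdd
  set L := ⨆ t, η t with hLdef
  have hLle : L ≤ ηstar := ciSup_le hle
  obtain ⟨xm, hxmS, hxmmax⟩ := hScompact.exists_isMaxOn hS hPc
  set M := P xm with hMdef
  have hM : 0 < M := hP xm hxmS
  have hPxs : 0 < P xs := hP xs hxsS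
  have hineq : ∀ t, (ηstar - η t) * P xs ≤ (η (t + 1) - η t) * M := by
    intro t
    have h2 : r xs - η t * P xs ≤ r (p t) - η t * P (p t) := (hpt t).2 hxsS
    have hrx : r xs = ηstar * P xs := by
      rw [hηstar, div_mul_cancel₀ _ (hPne xs hxsS)]
    have hrp : r (p t) = η (t + 1) * P (p t) := by
      rw [hupd t, div_mul_cancel₀ _ (hPne _ (hpt t).1)]
    have hPle : P (p t) ≤ M := hxmmax (hpt t).1
    have hPpos : 0 < P (p t) := hP _ (hpt t).1
    have hnn : η t ≤ η (t + 1) := hmono (Nat.le_succ t)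
    nlinarith
  have hL1 : Filter.Tendsto (fun t => (ηstar - η t) * P xs) Filter.atTop
      (nhds ((ηstar - L) * P xs)) :=
    (tendsto_const_nhds.sub hL).mul tendsto_const_nhds
  have hL2 : Filter.Tendsto (fun t => (η (t + 1) - η t) * M) Filter.atTop
      (nhds ((L - L) * M)) :=
    ((hL.comp (Filter.tendsto_add_atTop_nat 1)).sub hL).mul tendsto_const_nhds
  have hlim : (ηstar - L) * P xs ≤ (L - L) * M :=
    le_of_tendsto_of_tendsto' hL1 hL2 hineq
  have hsle : ηstar ≤ L := by nlinarith
  have : L = ηstar := le_antisymm hLle hsle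
  rwa [this] at hL
end

section
/- Consider η(M) = R(M)/(c·M + d) where R(M) = B·log₂(1 + α·M) with α, B, c, d > 0. Then η, viewed as a function of a real variable M > 0, attains a unique maximum at a finite M* > 0, and η is strictly increasing on (0, M*) and strictly decreasing on (M*, ∞). -/
open Real Set

/-- Energy efficiency versus number of antennas: unique interior maximizer,
increasing before and decreasing after. -/
theorem ee_vs_antennas (α B c d : ℝ) (hα : 0 < α) (hB : 0 < B) (hc : 0 < c) (hd : 0 < d) :
    ∃ Mstar : ℝ, 0 < Mstar ∧
      IsMaxOn (fun M : ℝ => B * Real.logb 2 (1 + α * M) / (c * M + d)) (Set.Ioi 0) Mstar ∧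
      StrictMonoOn (fun M : ℝ => B * Real.logb 2 (1 + α * M) / (c * M + d)) (Set.Ioc 0 Mstar) ∧
      StrictAntiOn (fun M : ℝ => B * Real.logb 2 (1 + α * M) / (c * M + d)) (Set.Ici Mstar) ∧
      ∀ M' : ℝ, 0 < M' →
        IsMaxOn (fun M : ℝ => B * Real.logb 2 (1 + α * M) / (c * M + d)) (Set.Ioi 0) M' →
        M' = Mstar := by
  set f : ℝ → ℝ := fun M => Real.log (1 + α * M) / (c * M + d) with hfdef
  set g : ℝ → ℝ := fun M => α * (c * M + d) / (1 + α * M) - c * Real.log (1 + α * M) with hgdef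
  -- derivative of the inner affine map
  have haff : ∀ M : ℝ, HasDerivAt (fun M : ℝ => 1 + α * M) α M := by
    intro M
    exact (((hasDerivAt_id' M).const_mul α).const_add 1).congr_deriv (mul_one α)
  have haff2 : ∀ M : ℝ, HasDerivAt (fun M : ℝ => c * M + d) c M := by
    intro M
    exact (((hasDerivAt_id' M).const_mul c).add_const d).congr_deriv (mul_one c)
  have hlog : ∀ M : ℝ, 0 ≤ M → HasDerivAt (fun M : ℝ => Real.log (1 + α * M)) (α / (1 + α * M)) M := by
    intro M hM
    have h1 : (0:ℝ) < 1 + α * M := by positivity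
    have := (Real.hasDerivAt_log h1.ne').comp M (haff M)
    rw [div_eq_inv_mul]; exact this
  -- derivative of g
  have hg' : ∀ M : ℝ, 0 ≤ M →
      HasDerivAt g (-(α ^ 2 * (c * M + d)) / (1 + α * M) ^ 2) M := by
    intro M hM
    have h1 : (0:ℝ) < 1 + α * M := by positivity
    have hnum : HasDerivAt (fun M : ℝ => α * (c * M + d)) (α * c) M := by
      simpa using (haff2 M).const_mul α
    have hq : HasDerivAt (fun M : ℝ => α * (c * M + d) / (1 + α * M))
        ((α * c * (1 + α * M) - α * (c * M + d) * α) / (1 + α * M) ^ 2) M :=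
      hnum.div (haff M) h1.ne'
    have hl : HasDerivAt (fun M : ℝ => c * Real.log (1 + α * M)) (c * (α / (1 + α * M))) M :=
      (hlog M hM).const_mul c
    have := hq.sub hl
    refine this.congr_deriv ?_
    field_simp
    ring
  -- derivative of f
  have hf' : ∀ M : ℝ, 0 ≤ M → HasDerivAt f (g M / (c * M + d) ^ 2) M := by
    intro M hM
    have h1 : (0:ℝ) < 1 + α * M := by positivity
    have h2 : (0:ℝ) < c * M + d := by positivity
    have := (hlog M hM).div (haff2 M) h2.ne'
    refine this.congr_deriv ?_
    congr 1
    simp only [hgdef]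
    ring
  -- g is strictly decreasing on [0, ∞)
  have hganti : StrictAntiOn g (Ici 0) := by
    apply strictAntiOn_of_deriv_neg (convex_Ici 0)
    · intro M hM
      exact (hg' M hM).continuousAt.continuousWithinAt
    · intro M hM
      rw [interior_Ici] at hM
      have hM0 : (0:ℝ) ≤ M := le_of_lt hM
      rw [(hg' M hM0).deriv]
      have h1 : (0:ℝ) < 1 + α * M := by positivity
      have h2 : (0:ℝ) < c * M + d := by positivity
      apply div_neg_of_neg_of_pos
      · have := mul_pos (pow_pos hα 2) h2
        linarith
      · positivity
  have hg0 : g 0 = α * d := by simp [hgdef]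
  -- a point where g is negative
  set X : ℝ := (Real.exp (2 + α * d / c) - 1) / α with hXdef
  have hexp1 : (1:ℝ) < Real.exp (2 + α * d / c) := by
    rw [Real.one_lt_exp_iff]
    positivity
  have hX0 : 0 < X := by
    apply div_pos _ hα
    linarith
  have h1X : 1 + α * X = Real.exp (2 + α * d / c) := by
    have hαX : α * X = Real.exp (2 + α * d / c) - 1 := by
      rw [hXdef]; field_simp
    linarith
  have hlogX : Real.log (1 + α * X) = 2 + α * d / c := by
    rw [h1X, Real.log_exp]
  have hgX : g X < 0 := by
    have h1 : (0:ℝ) < 1 + α * X := by positivity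
    have hb : α * (c * X + d) ≤ (c + α * d) * (1 + α * X) := by
      have hkey : (c + α * d) * (1 + α * X) - α * (c * X + d) = c + α ^ 2 * d * X := by ring
      have hpos : (0:ℝ) < α ^ 2 * d * X := by positivity
      linarith
    have hq : α * (c * X + d) / (1 + α * X) ≤ c + α * d := by
      rw [div_le_iff₀ h1]; linarith
    have hct : c * Real.log (1 + α * X) = 2 * c + α * d := by
      rw [hlogX]; field_simp
    simp only [hgdef]
    rw [hct]
    linarith
  -- IVT: unique root Mstar of g
  have hcont : ContinuousOn g (Icc 0 X) := fun M hM =>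
    (hg' M hM.1).continuousAt.continuousWithinAt
  have hiv : (0:ℝ) ∈ g '' Ioo 0 X := by
    apply intermediate_value_Ioo' hX0.le hcont
    constructor
    · exact hgX
    · rw [hg0]; positivity
  obtain ⟨Mstar, hMstarmem, hgMstar⟩ := hiv
  have hMs0 : 0 < Mstar := hMstarmem.1
  -- f strictly increasing on [0, Mstar]
  have hfmono : StrictMonoOn f (Icc 0 Mstar) := by
    apply strictMonoOn_of_deriv_pos (convex_Icc 0 Mstar)
    · intro M hM
      exact (hf' M hM.1).continuousAt.continuousWithinAt
    · intro M hM
      rw [interior_Icc] at hM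
      have hM0 : (0:ℝ) ≤ M := hM.1.le
      rw [(hf' M hM0).deriv]
      have h2 : (0:ℝ) < c * M + d := by positivity
      have hgpos : 0 < g M := by
        have := hganti (by exact le_of_lt hM.1 : (0:ℝ) ≤ M) (le_of_lt hMs0) hM.2
        rw [hgMstar] at this
        exact this
      exact div_pos hgpos (by positivity)
  -- f strictly decreasing on [Mstar, ∞)
  have hfanti : StrictAntiOn f (Ici Mstar) := by
    apply strictAntiOn_of_deriv_neg (convex_Ici Mstar)
    · intro M hM
      exact (hf' M (hMs0.le.trans hM)).continuousAt.continuousWithinAt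
    · intro M hM
      rw [interior_Ici] at hM
      have hM0 : (0:ℝ) ≤ M := (hMs0.trans hM).le
      rw [(hf' M hM0).deriv]
      have h2 : (0:ℝ) < c * M + d := by positivity
      have hgneg : g M < 0 := by
        have := hganti hMs0.le hM0 hM
        rw [hgMstar] at this
        exact this
      exact div_neg_of_neg_of_pos hgneg (by positivity)
  -- f attains its max on (0,∞) at Mstar
  have hfmax : ∀ M ∈ Ioi (0:ℝ), f M ≤ f Mstar := by
    intro M hM
    rcases le_total M Mstar with h | h
    · exact hfmono.monotoneOn ⟨(mem_Ioi.mp hM).le, h⟩ ⟨hMs0.le, le_refl _⟩ h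
    · exact hfanti.antitoneOn (self_mem_Ici) h h
  -- rewrite η in terms of f
  have hlog2 : (0:ℝ) < Real.log 2 := Real.log_pos (by norm_num)
  set k : ℝ := B / Real.log 2 with hkdef
  have hk : 0 < k := by positivity
  have hfun : (fun M : ℝ => B * Real.logb 2 (1 + α * M) / (c * M + d)) = fun M => k * f M := by
    funext M
    simp only [Real.logb, hfdef, hkdef]
    ring
  rw [hfun]
  refine ⟨Mstar, hMs0, ?_, ?_, ?_, ?_⟩
  · intro M hM
    exact mul_le_mul_of_nonneg_left (hfmax M hM) hk.le
  · intro a ha b hb hab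
    have := hfmono ⟨ha.1.le, ha.2⟩ ⟨hb.1.le, hb.2⟩ hab
    exact mul_lt_mul_of_pos_left this hk
  · intro a ha b hb hab
    exact mul_lt_mul_of_pos_left (hfanti ha hb hab) hk
  · intro M' hM'0 hmax'
    by_contra hne
    have h1 : k * f M' ≤ k * f Mstar := mul_le_mul_of_nonneg_left (hfmax M' hM'0) hk.le
    have h2 : k * f Mstar ≤ k * f M' := hmax' (mem_Ioi.mpr hMs0)
    have heq : f M' = f Mstar := by
      have := le_antisymm h1 h2
      exact mul_left_cancel₀ hk.ne' this
    rcases lt_or_gt_of_ne hne with h | h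
    · have := hfmono ⟨hM'0.le, h.le⟩ ⟨hMs0.le, le_refl _⟩ h
      linarith [this, heq.le]
    · have := hfanti self_mem_Ici h.le h
      linarith [this, heq.le]
end
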